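/- Let n ≥ 3, let I be a finite nonempty set, and let G = Hₙ^{(I)} = {(g_i)_{i∈I} ∈ ∏_{i∈I} Hₙ : χ(g_i) = χ(g_j) for all i, j ∈ I} be the fiber product of copies of the hyperoctahedral group Hₙ over the total sign character χ. Let H ≤ G be a subgroup with H·M(G) = G and π_i(H) = Hₙ for all i ∈ I, where π_i is the projection to the i-th coordinate. Then H = G. -/

import Mathlib

/-!
Let `K_S ≤ G` be the elements trivial on the coordinates in `S`. We show `H ⊔ K_S = G` by adding
coordinates `i` to `S` one at a time; for `S = I` this is `H = G`. The step needs
`π_i(H ⊓ K_S) ⊇ π_i(K_S) = ker χ` (for `S ≠ ∅`). The subgroup `N = π_i(H ⊓ K_S)` is normal in `Hₙ`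
and lies in `ker χ`. If `N` maps onto `Sₙ`, commutators with vectors put every `e_i e_j` into `N`,
so `ker χ ≤ N`. Otherwise `N` lies in the preimage `T` of a maximal normal subgroup of `Sₙ`, and
`T` misses part of `ker χ`. This is impossible: because `H · M(G) = G`, every maximal normal
`T ⊇ π_i(H ⊓ K_S)` contains `π_i(K_S)`.
-/

open Equiv

open scoped Classical

noncomputable section

/-- The vector part `V = (𝔽₂)ⁿ` of the hyperoctahedral group (written
multiplicatively so that it can serve as the kernel of a semidirect product). -/
abbrev Vn (n : ℕ) : Type := Fin n → Multiplicative (ZMod 2)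

/-- The permutation action of `Sₙ` on `V = (𝔽₂)ⁿ` by permuting coordinates, as a
homomorphism `Sₙ →* Aut(V)`. -/
def permHom (n : ℕ) : Perm (Fin n) →* MulAut (Vn n) where
  toFun σ := MulEquiv.arrowCongr σ (MulEquiv.refl (Multiplicative (ZMod 2)))
  map_one' := by
    ext x i
    rfl
  map_mul' σ τ := by
    ext x i
    rfl

/-- The hyperoctahedral group `Hₙ = V ⋊ Sₙ`, `V = (𝔽₂)ⁿ`, with `Sₙ` permuting
coordinates; elements are written `⟨x, τ⟩` with `x ∈ V`, `τ ∈ Sₙ`. -/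
abbrev Hyp (n : ℕ) : Type := SemidirectProduct (Vn n) (Perm (Fin n)) (permHom n)

/-- The total sign `χ : Hₙ → {±1}`, `χ(x,τ) = (−1)^{x₁+⋯+xₙ}`, realized as a
homomorphism to `Multiplicative (ZMod 2) ≅ {±1}`. -/
def tsign (n : ℕ) : Hyp n →* Multiplicative (ZMod 2) where
  toFun g := Multiplicative.ofAdd (∑ i, Multiplicative.toAdd (g.left i))
  map_one' := by
    simp
  map_mul' g h := by
    simp only [SemidirectProduct.mul_left]
    rw [← ofAdd_add]
    congr 1
    have : ∑ i, Multiplicative.toAdd ((permHom n g.right h.left) i) =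
        ∑ i, Multiplicative.toAdd (h.left i) := by
      first
        | exact Equiv.sum_comp (g.right.symm) (fun i => Multiplicative.toAdd (h.left i))
        | simpa [permHom, MulEquiv.arrowCongr] using Equiv.sum_comp (g.right.symm)
            (fun i => Multiplicative.toAdd (h.left i))
    simp [Pi.mul_apply, Finset.sum_add_distrib, this]

/-- The subgroup `V_{n−1} ⋊ Sₙ = ker χ` of `Hₙ` (sum of signs zero). -/
def kerSign (n : ℕ) : Subgroup (Hyp n) := (tsign n).ker

/-- The subgroup `V_{n−1} ⋊ Aₙ` of `Hₙ`: total sign `0` and even permutation part. -/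
def Kn (n : ℕ) : Subgroup (Hyp n) :=
  (tsign n).ker ⊓ (alternatingGroup (Fin n)).comap SemidirectProduct.rightHom

/-- A maximal normal subgroup: a proper normal subgroup maximal among proper normal
subgroups. -/
def IsMaximalNormal {G : Type*} [Group G] (N : Subgroup G) : Prop :=
  N.Normal ∧ N ≠ ⊤ ∧ ∀ N' : Subgroup G, N'.Normal → N < N' → N' = ⊤

/-- The Melnikov subgroup `M(G)`: the intersection of all maximal normal subgroups of
`G` (equal to `G` itself when there are none, i.e. when `G` is trivial). -/
def melnikov (G : Type*) [Group G] : Subgroup G :=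
  sInf {N : Subgroup G | IsMaximalNormal N}

/-- The fiber product `Hₙ^{(I)} = {(g_i) ∈ ∏_I Hₙ : χ(g_i) = χ(g_j) for all i,j}`
of copies of the hyperoctahedral group over the total sign character. -/
def fiberProd (n : ℕ) (I : Type*) : Subgroup (I → Hyp n) where
  carrier := {g | ∀ i j, tsign n (g i) = tsign n (g j)}
  one_mem' := by intro i j; simp
  mul_mem' := by
    intro a b ha hb i j
    simp only [Pi.mul_apply, map_mul, ha i j, hb i j]
  inv_mem' := by
    intro a ha i j
    simp only [Pi.inv_apply, map_inv, ha i j]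

end

open Subgroup

section MaximalNormal

variable {G Q R : Type*} [Group G] [Group Q] [Group R]

theorem isMaximalNormal_comap_iff {f : G →* Q} (hf : Function.Surjective f) {N : Subgroup Q} :
    IsMaximalNormal (N.comap f) ↔ IsMaximalNormal N := by
  constructor
  · rintro ⟨hN, hN_ne, hN_max⟩
    refine ⟨map_comap_eq_self_of_surjective hf N ▸ hN.map f hf,
      fun h => hN_ne (by rw [h, comap_top]), fun N' hN' hlt => ?_⟩
    exact comap_injective hf <| by
      rw [comap_top]
      exact hN_max _ (hN'.comap f) ((comap_lt_comap_of_surjective hf).mpr hlt)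
  · rintro ⟨hN, hN_ne, hN_max⟩
    refine ⟨hN.comap f, fun h => hN_ne (comap_injective hf (h.trans (comap_top f).symm)),
      fun N' hN' hlt => ?_⟩
    have hcomap : comap f (map f N') = N' := comap_map_eq_self ((ker_le_comap f N).trans hlt.le)
    have hlt' : N < map f N' := (comap_lt_comap_of_surjective hf).mp (hcomap.symm ▸ hlt)
    rw [← hcomap, hN_max _ (hN'.map f hf) hlt', comap_top]

theorem IsMaximalNormal.melnikov_le {N : Subgroup G} (hN : IsMaximalNormal N) :
    melnikov G ≤ N :=
  sInf_le hN

instance melnikov_normal : (melnikov G).Normal := by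
  rw [melnikov, sInf_eq_iInf']
  exact normal_iInf_normal fun N => N.2.1

theorem exists_isMaximalNormal_ge [Finite G] {A : Subgroup G} (hA : A.Normal) (hA_ne : A ≠ ⊤) :
    ∃ T : Subgroup G, IsMaximalNormal T ∧ A ≤ T := by
  obtain ⟨T, hAT, hT⟩ := (Set.toFinite {T : Subgroup G | T.Normal ∧ T ≠ ⊤}).exists_le_maximal
    (show A ∈ {T : Subgroup G | T.Normal ∧ T ≠ ⊤} from ⟨hA, hA_ne⟩)
  refine ⟨T, ⟨hT.prop.1, hT.prop.2, fun N' hN' hlt => ?_⟩, hAT⟩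
  by_contra hN'_ne
  exact hlt.not_ge (hT.le_of_ge ⟨hN', hN'_ne⟩ hlt.le)

theorem normal_map_inf_of_map_eq_top {H K : Subgroup G} [K.Normal] {f : G →* Q}
    (hH : H.map f = ⊤) : ((H ⊓ K).map f).Normal := by
  constructor
  rintro _ ⟨k, hk, rfl⟩ a
  obtain ⟨h, hh, rfl⟩ := mem_map.mp (hH ▸ mem_top a)
  exact ⟨h * k * h⁻¹, ⟨H.mul_mem (H.mul_mem hh hk.1) (H.inv_mem hh),
    Normal.conj_mem ‹_› k hk.2 h⟩, by simp⟩

theorem sup_ker_inf_eq_top_of_map_le {H K : Subgroup G} (hHK : H ⊔ K = ⊤) {f : G →* Q}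
    (hf : K.map f ≤ (H ⊓ K).map f) : H ⊔ (f.ker ⊓ K) = ⊤ := by
  refine eq_top_iff.mpr (hHK ▸ sup_le le_sup_left fun k hk => ?_)
  obtain ⟨h, hh, hhk⟩ := hf (mem_map_of_mem f hk)
  have hker : h⁻¹ * k ∈ f.ker ⊓ K :=
    ⟨by simp [hhk], K.mul_mem (K.inv_mem hh.2) hk⟩
  simpa using mul_mem_sup hh.1 hker

theorem exists_extend_of_sup_eq_top {H K : Subgroup G} [K.Normal] (hHK : H ⊔ K = ⊤)
    (s : H →* R) (hs : ∀ h : H, (h : G) ∈ K → s h = 1) :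
    ∃ F : G →* R, K ≤ F.ker ∧ F.comp H.subtype = s := by
  set φ := (QuotientGroup.mk' K).comp H.subtype
  have hφ : Function.Surjective φ := by
    rintro ⟨g⟩
    obtain ⟨h, hh, k, hk, rfl⟩ := mem_sup_of_normal_right.mp (hHK ▸ mem_top g)
    exact ⟨⟨h, hh⟩, QuotientGroup.eq.mpr (by simpa using hk)⟩
  refine ⟨(φ.liftOfSurjective hφ ⟨s, fun h hh => hs h (by simpa [φ] using hh)⟩).comp
    (QuotientGroup.mk' K), fun k hk => ?_, MonoidHom.ext fun h => ?_⟩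
  · simp [MonoidHom.mem_ker, (QuotientGroup.eq_one_iff k).mpr hk]
  · exact φ.liftOfRightInverse_comp_apply _ (Function.rightInverse_surjInv hφ) _ h

/-- The key step: `F` below is the homomorphism `G → Q / T` that agrees with `π` on `H` and kills
`K`; its kernel is maximal normal, so it contains `M(G)`, as does `π⁻¹ T`. Writing `g ∈ K` as
`h m` with `h ∈ H`, `m ∈ M(G)` then puts `π g` into `T`. -/
theorem map_le_of_sup_melnikov_eq_top {H K : Subgroup G} [K.Normal]
    (hHM : H ⊔ melnikov G = ⊤) (hHK : H ⊔ K = ⊤) {π : G →* Q} (hπ : H.map π = ⊤)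
    {T : Subgroup Q} (hT : IsMaximalNormal T) (hHKT : (H ⊓ K).map π ≤ T) : K.map π ≤ T := by
  have := hT.1
  have hπ_surj : Function.Surjective π :=
    MonoidHom.range_eq_top.mp (top_le_iff.mp (hπ ▸ map_le_range π H))
  obtain ⟨F, hKF, hFH⟩ := exists_extend_of_sup_eq_top hHK
    ((QuotientGroup.mk' T).comp (π.comp H.subtype))
    fun h hK => (QuotientGroup.eq_one_iff _).mpr (hHKT ⟨h, ⟨h.2, hK⟩, rfl⟩)
  have hF_surj : Function.Surjective F := by
    rintro ⟨q⟩
    obtain ⟨h, hh, rfl⟩ := mem_map.mp (hπ ▸ mem_top q)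
    exact ⟨h, DFunLike.congr_fun hFH ⟨h, hh⟩⟩
  have hF_max : IsMaximalNormal F.ker := by
    rw [← MonoidHom.comap_bot, isMaximalNormal_comap_iff hF_surj,
      ← isMaximalNormal_comap_iff (QuotientGroup.mk'_surjective T), MonoidHom.comap_bot,
      QuotientGroup.ker_mk']
    exact hT
  have hπT_max : IsMaximalNormal (T.comap π) := (isMaximalNormal_comap_iff hπ_surj).mpr hT
  rintro _ ⟨g, hgK, rfl⟩
  obtain ⟨h, hh, m, hm, rfl⟩ := mem_sup_of_normal_right.mp (hHM ▸ mem_top g)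
  have hFh : F h = 1 := by
    simpa [MonoidHom.mem_ker.mp (hF_max.melnikov_le hm)] using hKF hgK
  have hπh : π h ∈ T :=
    (QuotientGroup.eq_one_iff _).mp ((DFunLike.congr_fun hFH ⟨h, hh⟩).symm.trans hFh)
  rw [map_mul]
  exact T.mul_mem hπh (hπT_max.melnikov_le hm)

end MaximalNormal

theorem Pi.mem_of_prod_eq_one {ι A : Type*} [Fintype ι] [DecidableEq ι] [CommGroup A]
    {W : Subgroup (ι → A)} (hW : ∀ i j (a : A), Pi.mulSingle i a / Pi.mulSingle j a ∈ W)
    {u : ι → A} (hu : ∏ i, u i = 1) : u ∈ W := by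
  cases isEmpty_or_nonempty ι with
  | inl _ => rw [Subsingleton.elim u 1]; exact W.one_mem
  | inr _ =>
    obtain ⟨i₀⟩ := ‹Nonempty ι›
    have h₀ : ∏ i, (Pi.mulSingle i₀ (u i) : ι → A) = 1 := by
      simpa [hu] using (map_prod (MonoidHom.mulSingle (fun _ => A) i₀) u Finset.univ).symm
    have hu_eq : u = ∏ i, (Pi.mulSingle i (u i) / Pi.mulSingle i₀ (u i)) := by
      rw [Finset.prod_div_distrib, Finset.univ_prod_mulSingle, h₀, div_one]
    rw [hu_eq]
    exact W.prod_mem fun i _ => hW i i₀ (u i)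

theorem SemidirectProduct.inl_mul_inv_mem {N G : Type*} [CommGroup N] [Group G]
    {φ : G →* MulAut N} {S : Subgroup (N ⋊[φ] G)} [S.Normal] {g : N ⋊[φ] G} (hg : g ∈ S)
    (x : N) : inl (x * (φ g.right x)⁻¹) ∈ S := by
  have hcomm : inl x * g * (inl x)⁻¹ * g⁻¹ = inl (x * (φ g.right x)⁻¹) := by
    ext <;> simp [mul_comm, mul_left_comm]
  rw [← hcomm]
  exact S.mul_mem (Normal.conj_mem ‹_› g hg _) (S.inv_mem hg)

namespace Hyp

open SemidirectProduct

variable {n : ℕ}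

theorem tsign_apply (g : Hyp n) : tsign n g = ∏ i, g.left i := by
  simp [tsign, ofAdd_sum]

theorem permHom_mulSingle (σ : Perm (Fin n)) (i : Fin n) (a : Multiplicative (ZMod 2)) :
    permHom n σ (Pi.mulSingle i a) = Pi.mulSingle (σ i) a := by
  ext m
  simp [permHom, MulEquiv.arrowCongr, Pi.mulSingle_apply, Equiv.symm_apply_eq]

theorem kerSign_le_of_map_rightHom_eq_top {N : Subgroup (Hyp n)} [N.Normal]
    (hNχ : N ≤ kerSign n) (hN : N.map rightHom = ⊤) : kerSign n ≤ N := by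
  have hW : ∀ i j a, Pi.mulSingle i a / Pi.mulSingle j a ∈ N.comap (inl : Vn n →* Hyp n) := by
    intro i j a
    obtain ⟨w, hw, hσ : w.right = swap i j⟩ := mem_map.mp (hN ▸ mem_top (swap i j))
    simpa [hσ, permHom_mulSingle, div_eq_mul_inv] using inl_mul_inv_mem hw (Pi.mulSingle i a)
  intro g hg
  obtain ⟨w, hw, hwg : w.right = g.right⟩ := mem_map.mp (hN ▸ mem_top g.right)
  have hu : inl (g.left * w.left⁻¹) ∈ N := by
    refine Pi.mem_of_prod_eq_one hW ?_
    have hχg : tsign n g = 1 := hg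
    have hχw : tsign n w = 1 := hNχ hw
    simp_all [tsign_apply, Finset.prod_mul_distrib]
  have hg_eq : g = inl (g.left * w.left⁻¹) * w := by
    ext <;> simp [hwg]
  rw [hg_eq]
  exact N.mul_mem hu hw

theorem exists_isMaximalNormal_not_le {N : Subgroup (Hyp n)} [hN : N.Normal]
    (hNχ : N ≤ kerSign n) (h : ¬ kerSign n ≤ N) :
    ∃ T : Subgroup (Hyp n), IsMaximalNormal T ∧ N ≤ T ∧ ¬ kerSign n ≤ T := by
  obtain ⟨P, hP, hNP⟩ := exists_isMaximalNormal_ge (hN.map _ rightHom_surjective)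
    fun htop => h (kerSign_le_of_map_rightHom_eq_top hNχ htop)
  refine ⟨P.comap rightHom, (isMaximalNormal_comap_iff rightHom_surjective).mpr hP,
    map_le_iff_le_comap.mp hNP, fun hχ => hP.2.1 (eq_top_iff.mpr fun σ _ => ?_)⟩
  have h1σ : (⟨1, σ⟩ : Hyp n) ∈ kerSign n := by
    simp [kerSign, MonoidHom.mem_ker, tsign_apply]
  exact hχ h1σ

end Hyp

namespace FiberProd

variable {n : ℕ} {I : Type*}

variable (n I) in
def proj (i : I) : fiberProd n I →* Hyp n :=
  (Pi.evalMonoidHom (fun _ : I => Hyp n) i).comp (fiberProd n I).subtype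

variable (n) in
def kerOn (S : Finset I) : Subgroup (fiberProd n I) :=
  ⨅ i ∈ S, (proj n I i).ker

instance (S : Finset I) : (kerOn n S).Normal :=
  normal_iInf_normal fun _ => normal_iInf_normal fun _ => inferInstance

theorem mem_kerOn {S : Finset I} {g : fiberProd n I} : g ∈ kerOn n S ↔ ∀ i ∈ S, g.1 i = 1 := by
  simp [kerOn, proj]

theorem kerOn_empty : kerOn n (∅ : Finset I) = ⊤ := by
  simp [kerOn]

theorem kerOn_insert (i : I) (S : Finset I) :
    kerOn n (insert i S) = (proj n I i).ker ⊓ kerOn n S :=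
  Finset.iInf_insert i S _

theorem kerOn_univ [Fintype I] : kerOn n (Finset.univ : Finset I) = ⊥ :=
  eq_bot_iff.mpr fun _ hg => Subtype.ext (funext fun i => mem_kerOn.mp hg i (Finset.mem_univ i))

theorem map_proj_kerOn {S : Finset I} (hS : S.Nonempty) {i : I} (hi : i ∉ S) :
    (kerOn n S).map (proj n I i) = kerSign n := by
  apply le_antisymm
  · rintro _ ⟨g, hg, rfl⟩
    obtain ⟨j, hj⟩ := hS
    show tsign n (g.1 i) = 1
    rw [g.2 i j, mem_kerOn.mp hg j hj, map_one]
  · intro k (hk : tsign n k = 1)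
    have hχ : ∀ j, tsign n ((Pi.mulSingle i k : I → Hyp n) j) = 1 := fun j => by
      rcases eq_or_ne j i with rfl | hj <;> simp [*]
    refine ⟨⟨Pi.mulSingle i k, fun a b => by rw [hχ a, hχ b]⟩, mem_kerOn.mpr fun j hj => ?_, ?_⟩
    · exact Pi.mulSingle_eq_of_ne (M := fun _ : I => Hyp n) (ne_of_mem_of_not_mem hj hi) k
    · simp [proj]

theorem sup_kerOn_insert_eq_top {H : Subgroup (fiberProd n I)}
    (hHM : H ⊔ melnikov (fiberProd n I) = ⊤) (hH : ∀ i, H.map (proj n I i) = ⊤)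
    {S : Finset I} (hHS : H ⊔ kerOn n S = ⊤) {i : I} (hi : i ∉ S) :
    H ⊔ kerOn n (insert i S) = ⊤ := by
  rw [kerOn_insert]
  refine sup_ker_inf_eq_top_of_map_le hHS ?_
  rcases S.eq_empty_or_nonempty with rfl | hS
  · simp [kerOn_empty, hH i]
  · have := normal_map_inf_of_map_eq_top (H := H) (K := kerOn n S) (hH i)
    have hN : (H ⊓ kerOn n S).map (proj n I i) ≤ kerSign n :=
      map_proj_kerOn hS hi ▸ map_mono inf_le_right
    rw [map_proj_kerOn hS hi]
    by_contra hle
    obtain ⟨T, hT, hNT, hχT⟩ := Hyp.exists_isMaximalNormal_not_le hN hle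
    exact hχT (map_proj_kerOn hS hi ▸ map_le_of_sup_melnikov_eq_top hHM hHS (hH i) hT hNT)

end FiberProd

theorem eq_top_of_sup_melnikov_fiberProd_general (n : ℕ) (I : Type*) [Finite I]
    (H : Subgroup ↥(fiberProd n I))
    (h1 : H ⊔ melnikov ↥(fiberProd n I) = ⊤)
    (h2 : ∀ i : I,
      H.map ((Pi.evalMonoidHom (fun _ : I => Hyp n) i).comp (fiberProd n I).subtype) = ⊤) :
    H = ⊤ := by
  have := Fintype.ofFinite I
  have hS : ∀ S : Finset I, H ⊔ FiberProd.kerOn n S = ⊤ := by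
    intro S
    induction S using Finset.induction_on with
    | empty => simp [FiberProd.kerOn_empty]
    | insert i S hi ih => exact FiberProd.sup_kerOn_insert_eq_top h1 h2 ih hi
  simpa [FiberProd.kerOn_univ] using hS Finset.univ

/-- **Proposition (filling the fiber product of hyperoctahedral groups).**
Let `n ≥ 3`, `I` finite nonempty, `G = Hₙ^{(I)}` the fiber product of copies of `Hₙ`
over the total sign `χ`, and `H ≤ G`. If `H·M(G) = G` and the projection of `H` to
each coordinate is all of `Hₙ`, then `H = G`. -/
theorem eq_top_of_sup_melnikov_fiberProd (n : ℕ) (hn : 3 ≤ n) (I : Type*) [Finite I]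
    [Nonempty I] (H : Subgroup ↥(fiberProd n I))
    (h1 : H ⊔ melnikov ↥(fiberProd n I) = ⊤)
    (h2 : ∀ i : I,
      H.map ((Pi.evalMonoidHom (fun _ : I => Hyp n) i).comp (fiberProd n I).subtype) = ⊤) :
    H = ⊤ :=
  eq_top_of_sup_melnikov_fiberProd_general n I H h1 h2
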